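/- arXiv:2603.07698 — 3 statements merged into one kernel-verified Lean document; each statement's English description precedes it below -/
import Mathlib

section
/- Let E be a real normed vector space, let T ≥ 1 be an integer, let B ≥ 0, and let x : ℕ → E be a sequence with ‖x(q)‖ ≤ B for every q ≥ 0. Then Σ_{q=1}^∞ 2^{-q} · ‖ x(0) + (if 2^q ≤ T then 2^q • (x(q) − x(q−1)) else 0) ‖² ≤ 2B² + 16B²T. -/
/-!
Bound each term pointwise: `‖x₀ + w • (y - z)‖² ≤ 2B² + 8w²B²`, so after weighting by `1/w` with
`w = 2^(q+1)` a term is at most `2B² · 2^-(q+1)` plus, on the active levels `2^(q+1) ≤ T`,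
`8B² · 2^(q+1)`. The first part sums to `2B²`; the active levels are `q < log₂ T`, and their
geometric sum is `2^(log₂ T + 1) - 2 ≤ 2T`.
-/

open Finset

lemma norm_add_smul_sub_sq_le {E : Type*} [SeminormedAddCommGroup E] [NormedSpace ℝ E]
    {B c : ℝ} {a y z : E} (ha : ‖a‖ ≤ B) (hy : ‖y‖ ≤ B) (hz : ‖z‖ ≤ B) :
    ‖a + c • (y - z)‖ ^ 2 ≤ 2 * B ^ 2 + 8 * c ^ 2 * B ^ 2 := by
  have hnorm : ‖a + c • (y - z)‖ ≤ B + |c| * (2 * B) :=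
    calc ‖a + c • (y - z)‖ ≤ ‖a‖ + |c| * (‖y‖ + ‖z‖) := by
          grw [norm_add_le, norm_smul, norm_sub_le, Real.norm_eq_abs]
      _ ≤ B + |c| * (2 * B) := by gcongr; linarith
  calc ‖a + c • (y - z)‖ ^ 2 ≤ (B + |c| * (2 * B)) ^ 2 := by gcongr
    _ ≤ 2 * (B ^ 2 + (|c| * (2 * B)) ^ 2) := add_sq_le
    _ = 2 * B ^ 2 + 8 * c ^ 2 * B ^ 2 := by rw [mul_pow, sq_abs]; ring

lemma one_div_mul_norm_add_ite_smul_sq_le {E : Type*} [SeminormedAddCommGroup E] [NormedSpace ℝ E]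
    {B w : ℝ} {a y z : E} (ha : ‖a‖ ≤ B) (hy : ‖y‖ ≤ B) (hz : ‖z‖ ≤ B) (hw : 0 < w)
    (P : Prop) [Decidable P] :
    1 / w * ‖a + (if P then w • (y - z) else 0)‖ ^ 2 ≤
      2 * B ^ 2 * (1 / w) + 8 * B ^ 2 * (if P then w else 0) := by
  split_ifs
  · calc 1 / w * ‖a + w • (y - z)‖ ^ 2 ≤ 1 / w * (2 * B ^ 2 + 8 * w ^ 2 * B ^ 2) := by
          gcongr; exact norm_add_smul_sub_sq_le ha hy hz
      _ = 2 * B ^ 2 * (1 / w) + 8 * B ^ 2 * w := by field_simp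
  · have : ‖a‖ ^ 2 ≤ 2 * B ^ 2 := by nlinarith [norm_nonneg a]
    rw [add_zero, mul_zero, add_zero, mul_comm]
    gcongr

lemma two_pow_succ_le_iff_lt_log {q T : ℕ} : 2 ^ (q + 1) ≤ T ↔ q < Nat.log 2 T := by
  rcases eq_or_ne T 0 with rfl | hT
  · simp
  · exact (Nat.le_log_iff_pow_le one_lt_two hT).symm

lemma sum_range_two_pow_succ (K : ℕ) : ∑ q ∈ range K, (2 : ℝ) ^ (q + 1) = 2 ^ (K + 1) - 2 := by
  induction K with
  | zero => simp
  | succ K ih => rw [sum_range_succ, ih]; ring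

lemma hasSum_ite_two_pow_succ_le (T : ℕ) :
    HasSum (fun q : ℕ ↦ if 2 ^ (q + 1) ≤ T then (2 : ℝ) ^ (q + 1) else 0)
      (2 ^ (Nat.log 2 T + 1) - 2) := by
  have hsupport : ∀ q ∉ range (Nat.log 2 T),
      (if 2 ^ (q + 1) ≤ T then (2 : ℝ) ^ (q + 1) else 0) = 0 := fun q hq ↦ by
    simp_all [two_pow_succ_le_iff_lt_log]
  have hsum : ∑ q ∈ range (Nat.log 2 T), (if 2 ^ (q + 1) ≤ T then (2 : ℝ) ^ (q + 1) else 0) =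
      2 ^ (Nat.log 2 T + 1) - 2 := by
    rw [← sum_range_two_pow_succ]
    exact sum_congr rfl fun q hq ↦ by simp_all [two_pow_succ_le_iff_lt_log]
  exact hsum ▸ hasSum_sum_of_ne_finset_zero hsupport

lemma two_pow_log_two_succ_sub_two_le (T : ℕ) : (2 : ℝ) ^ (Nat.log 2 T + 1) - 2 ≤ 2 * T := by
  rcases eq_or_ne T 0 with rfl | hT
  · norm_num
  · have : (2 : ℝ) ^ Nat.log 2 T ≤ T := by exact_mod_cast Nat.pow_log_le_self 2 hT
    rw [pow_succ]
    linarith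

lemma hasSum_one_div_two_pow_succ : HasSum (fun q : ℕ ↦ (1 : ℝ) / 2 ^ (q + 1)) 1 := by
  convert hasSum_geometric_two' 1 using 2 with q
  rw [pow_succ']
  ring

theorem mlmc_second_order_bound_general {E : Type*} [NormedAddCommGroup E] [NormedSpace ℝ E]
    (T : ℕ) (B : ℝ) (x : ℕ → E)
    (hx : ∀ q, ‖x q‖ ≤ B) :
    ∑' q : ℕ, ((1 : ℝ) / 2 ^ (q + 1)) *
      ‖x 0 + (if 2 ^ (q + 1) ≤ T then ((2 : ℝ) ^ (q + 1)) • (x (q + 1) - x q) else 0)‖ ^ 2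
      ≤ 2 * B ^ 2 + 16 * B ^ 2 * T := by
  have hmajorant := (hasSum_one_div_two_pow_succ.mul_left (2 * B ^ 2)).add
    ((hasSum_ite_two_pow_succ_le T).mul_left (8 * B ^ 2))
  refine Real.tsum_le_of_sum_le (fun q ↦ by positivity) fun s ↦ ?_
  calc _ ≤ _ := sum_le_sum fun q _ ↦
          one_div_mul_norm_add_ite_smul_sq_le (hx 0) (hx (q + 1)) (hx q) (by positivity) _
    _ ≤ _ := sum_le_hasSum s (fun q _ ↦ by positivity) hmajorant
    _ ≤ 2 * B ^ 2 + 16 * B ^ 2 * T := by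
        nlinarith [two_pow_log_two_succ_sub_two_le T, sq_nonneg B]

/-- Second-order MLMC error bound: if every level estimate is bounded in norm by B,
the expected squared norm of the MLMC estimator is at most 2B² + 16B²T. -/
theorem mlmc_second_order_bound {E : Type*} [NormedAddCommGroup E] [NormedSpace ℝ E]
    (T : ℕ) (hT : 1 ≤ T) (B : ℝ) (hB : 0 ≤ B) (x : ℕ → E)
    (hx : ∀ q, ‖x q‖ ≤ B) :
    ∑' q : ℕ, ((1 : ℝ) / 2 ^ (q + 1)) *
      ‖x 0 + (if 2 ^ (q + 1) ≤ T then ((2 : ℝ) ^ (q + 1)) • (x (q + 1) - x q) else 0)‖ ^ 2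
      ≤ 2 * B ^ 2 + 16 * B ^ 2 * T :=
  mlmc_second_order_bound_general T B x hx
end

section
/- Let (Ω, μ) be a probability space, let E be a real normed vector space, let T ≥ 1 be an integer, set N = ⌊log₂ T⌋, let μ̄ ∈ E, let K ≥ 0, and let x_j : Ω → E (j ≥ 0) be square-integrable random elements such that ∫ ‖x_j(ω) − μ̄‖² dμ(ω) ≤ K / 2^j for every 0 ≤ j ≤ N. Then Σ_{q=1}^∞ 2^{-q} ∫ ‖ x_0(ω) + (if 2^q ≤ T then 2^q • (x_q(ω) − x_{q−1}(ω)) else 0) − μ̄ ‖² dμ(ω) ≤ 2K(1 + 6N). That is, the mean-squared error of the MLMC estimator with respect to the target μ̄ is at most 2K(1 + 6⌊log₂ T⌋). -/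
/-!
Write the error of the level-`q` estimator as `(x₀ - μ̄) + 2^(q+1) • (x_{q+1} - μ̄) - 2^(q+1) • (x_q - μ̄)`
and use `‖a + b - c‖² ≤ 3 (‖a‖² + ‖b‖² + ‖c‖²)`. For an active level (`q + 1 ≤ N`) the factor
`4^(q+1)` from the squared weight is paid for by the decay `K / 2^q` of the level errors and by the
probability `2^-(q+1)` of the level, so it contributes at most `3K / 2^(q+1) + 9K`; a truncated level
contributes at most `K / 2^(q+1)`. Summing gives `K + 10 K N ≤ 2K (1 + 6N)`.
-/

open MeasureTheory

lemma norm_add_sub_sq_le {E : Type*} [SeminormedAddCommGroup E] (u v w : E) :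
    ‖u + v - w‖ ^ 2 ≤ 3 * (‖u‖ ^ 2 + ‖v‖ ^ 2 + ‖w‖ ^ 2) := by
  have h : ‖u + v - w‖ ≤ ‖u‖ + ‖v‖ + ‖w‖ :=
    (norm_sub_le _ _).trans (by gcongr; exact norm_add_le _ _)
  nlinarith [pow_le_pow_left₀ (norm_nonneg _) h 2,
    sq_nonneg (‖u‖ - ‖v‖), sq_nonneg (‖v‖ - ‖w‖), sq_nonneg (‖u‖ - ‖w‖)]

lemma norm_add_smul_sub_sub_sq_le {E : Type*} [SeminormedAddCommGroup E] [NormedSpace ℝ E]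
    (a b c m : E) (r : ℝ) :
    ‖a + r • (b - c) - m‖ ^ 2 ≤ 3 * (‖a - m‖ ^ 2 + r ^ 2 * ‖b - m‖ ^ 2 + r ^ 2 * ‖c - m‖ ^ 2) := by
  have h : a + r • (b - c) - m = (a - m) + r • (b - m) - r • (c - m) := by
    simp only [smul_sub]; abel
  simpa only [h, norm_smul, mul_pow, Real.norm_eq_abs, sq_abs] using
    norm_add_sub_sq_le (a - m) (r • (b - m)) (r • (c - m))

section

variable {Ω E : Type*} [MeasurableSpace Ω] {μ : Measure Ω} [IsFiniteMeasure μ]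
  [NormedAddCommGroup E] [NormedSpace ℝ E]

lemma integral_norm_add_smul_sub_sub_sq_le {a b c : Ω → E} (ha : MemLp a 2 μ)
    (hb : MemLp b 2 μ) (hc : MemLp c 2 μ) (m : E) (r : ℝ) :
    ∫ ω, ‖a ω + r • (b ω - c ω) - m‖ ^ 2 ∂μ ≤
      3 * (∫ ω, ‖a ω - m‖ ^ 2 ∂μ + r ^ 2 * ∫ ω, ‖b ω - m‖ ^ 2 ∂μ
        + r ^ 2 * ∫ ω, ‖c ω - m‖ ^ 2 ∂μ) := by
  have hsq : ∀ {f : Ω → E}, MemLp f 2 μ → Integrable (fun ω => ‖f ω - m‖ ^ 2) μ :=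
    fun hf => (hf.sub (memLp_const m)).integrable_norm_pow'
  have hlhs : Integrable (fun ω => ‖a ω + r • (b ω - c ω) - m‖ ^ 2) μ :=
    ((ha.add ((hb.sub hc).const_smul r)).sub (memLp_const m)).integrable_norm_pow'
  have hab : Integrable (fun ω => ‖a ω - m‖ ^ 2 + r ^ 2 * ‖b ω - m‖ ^ 2) μ :=
    (hsq ha).add ((hsq hb).const_mul _)
  have habc : Integrable (fun ω => ‖a ω - m‖ ^ 2 + r ^ 2 * ‖b ω - m‖ ^ 2
      + r ^ 2 * ‖c ω - m‖ ^ 2) μ :=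
    hab.add ((hsq hc).const_mul _)
  refine (integral_mono hlhs (habc.const_mul 3)
    fun ω => norm_add_smul_sub_sub_sq_le (a ω) (b ω) (c ω) m r).trans_eq ?_
  rw [integral_const_mul, integral_add hab ((hsq hc).const_mul _),
    integral_add (hsq ha) ((hsq hb).const_mul _), integral_const_mul, integral_const_mul]

lemma mlmc_level_term_le {x : ℕ → Ω → E} (hL2 : ∀ j, MemLp (x j) 2 μ) {m : E} {K : ℝ}
    {q : ℕ} (h0 : ∫ ω, ‖x 0 ω - m‖ ^ 2 ∂μ ≤ K) (hq : ∫ ω, ‖x q ω - m‖ ^ 2 ∂μ ≤ K / 2 ^ q)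
    (hq1 : ∫ ω, ‖x (q + 1) ω - m‖ ^ 2 ∂μ ≤ K / 2 ^ (q + 1)) :
    1 / 2 ^ (q + 1) * ∫ ω, ‖x 0 ω + (2 : ℝ) ^ (q + 1) • (x (q + 1) ω - x q ω) - m‖ ^ 2 ∂μ
      ≤ 3 * (K / 2 ^ (q + 1)) + 9 * K := by
  calc 1 / 2 ^ (q + 1) * ∫ ω, ‖x 0 ω + (2 : ℝ) ^ (q + 1) • (x (q + 1) ω - x q ω) - m‖ ^ 2 ∂μ
      ≤ 1 / 2 ^ (q + 1) * (3 * (K + ((2 : ℝ) ^ (q + 1)) ^ 2 * (K / 2 ^ (q + 1))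
          + ((2 : ℝ) ^ (q + 1)) ^ 2 * (K / 2 ^ q))) := by
        gcongr
        exact (integral_norm_add_smul_sub_sub_sq_le (hL2 0) (hL2 (q + 1)) (hL2 q) m _).trans
          (by gcongr)
    _ = 3 * (K / 2 ^ (q + 1)) + 9 * K := by
        field_simp
        ring

end

lemma tsum_le_of_le_geometric_add_indicator {t : ℕ → ℝ} {K C : ℝ} {N : ℕ}
    (ht0 : ∀ q, 0 ≤ t q) (ht : ∀ q, t q ≤ K / 2 ^ (q + 1) + if q < N then C else 0) :
    ∑' q, t q ≤ K + N * C := by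
  have hgeom : (fun q : ℕ => K / 2 ^ (q + 1)) = fun q => K / 2 / 2 ^ q := by
    funext q; rw [pow_succ', div_div]
  have hfin : ∀ q ∉ Finset.range N, (if q < N then C else 0) = 0 := fun q hq =>
    if_neg (by simpa using hq)
  have hgeom_sum : Summable fun q : ℕ => K / 2 ^ (q + 1) := hgeom ▸ summable_geometric_two' K
  have hsum : Summable fun q : ℕ => K / 2 ^ (q + 1) + if q < N then C else 0 :=
    hgeom_sum.add (summable_of_ne_finset_zero hfin)
  calc ∑' q, t q ≤ ∑' q : ℕ, (K / 2 ^ (q + 1) + if q < N then C else 0) :=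
        (hsum.of_nonneg_of_le ht0 ht).tsum_le_tsum ht hsum
    _ = K + N * C := by
        rw [hgeom_sum.tsum_add (summable_of_ne_finset_zero hfin),
          hgeom, tsum_geometric_two', tsum_eq_sum hfin]
        simp [Finset.sum_ite_of_true (fun q hq => Finset.mem_range.mp hq)]

theorem mlmc_mse_bound_general {Ω : Type*} [MeasurableSpace Ω] (μ : Measure Ω)
    [IsProbabilityMeasure μ]
    {E : Type*} [NormedAddCommGroup E] [NormedSpace ℝ E]
    (T : ℕ) (μbar : E) (K : ℝ)
    (x : ℕ → Ω → E)
    (hL2 : ∀ j, MemLp (x j) 2 μ)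
    (hmse : ∀ j ≤ Nat.log 2 T, ∫ ω, ‖x j ω - μbar‖ ^ 2 ∂μ ≤ K / 2 ^ j) :
    ∑' q : ℕ, ((1 : ℝ) / 2 ^ (q + 1)) *
      ∫ ω, ‖x 0 ω +
          (if 2 ^ (q + 1) ≤ T then ((2 : ℝ) ^ (q + 1)) • (x (q + 1) ω - x q ω) else 0)
          - μbar‖ ^ 2 ∂μ
      ≤ 2 * K * (1 + 6 * (Nat.log 2 T : ℝ)) := by
  set N := Nat.log 2 T
  have h0 : ∫ ω, ‖x 0 ω - μbar‖ ^ 2 ∂μ ≤ K := by simpa using hmse 0 N.zero_le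
  have hK : 0 ≤ K := (integral_nonneg fun ω => by positivity).trans h0
  refine (tsum_le_of_le_geometric_add_indicator (C := 10 * K) (fun q => by positivity)
    fun q => ?_).trans (by linarith [mul_nonneg hK N.cast_nonneg])
  by_cases hq : 2 ^ (q + 1) ≤ T
  · have hqN : q + 1 ≤ N := Nat.le_log_of_pow_le one_lt_two hq
    have hhalf : K / 2 ^ (q + 1) ≤ K / 2 :=
      div_le_div_of_nonneg_left hK two_pos (le_self_pow₀ one_le_two q.succ_ne_zero)
    simp only [if_pos hq, if_pos (show q < N by omega)]
    refine (mlmc_level_term_le hL2 h0 (hmse q (by omega)) (hmse (q + 1) hqN)).trans ?_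
    linarith
  · have hC : 0 ≤ if q < N then 10 * K else 0 := by split_ifs <;> positivity
    simp only [if_neg hq, add_zero]
    calc 1 / 2 ^ (q + 1) * ∫ ω, ‖x 0 ω - μbar‖ ^ 2 ∂μ ≤ 1 / 2 ^ (q + 1) * K := by gcongr
      _ ≤ _ := by rw [one_div_mul_eq_div]; linarith

/-- MLMC mean-squared error bound: if the level-j estimates x_j have mean-squared
error at most K/2^j around the target μ̄ for every 0 ≤ j ≤ N = ⌊log₂ T⌋, then the
mean-squared error of the MLMC estimator (with level Q ~ Geom(1/2) independent of ω)
is at most 2K(1 + 6N). -/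
theorem mlmc_mse_bound {Ω : Type*} [MeasurableSpace Ω] (μ : Measure Ω)
    [IsProbabilityMeasure μ]
    {E : Type*} [NormedAddCommGroup E] [NormedSpace ℝ E]
    (T : ℕ) (hT : 1 ≤ T) (μbar : E) (K : ℝ) (hK : 0 ≤ K)
    (x : ℕ → Ω → E)
    (hL2 : ∀ j, MemLp (x j) 2 μ)
    (hmse : ∀ j ≤ Nat.log 2 T, ∫ ω, ‖x j ω - μbar‖ ^ 2 ∂μ ≤ K / 2 ^ j) :
    ∑' q : ℕ, ((1 : ℝ) / 2 ^ (q + 1)) *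
      ∫ ω, ‖x 0 ω +
          (if 2 ^ (q + 1) ≤ T then ((2 : ℝ) ^ (q + 1)) • (x (q + 1) ω - x q ω) else 0)
          - μbar‖ ^ 2 ∂μ
      ≤ 2 * K * (1 + 6 * (Nat.log 2 T : ℝ)) :=
  mlmc_mse_bound_general μ T μbar K x hL2 hmse
end

section
/- Let S be a nonempty finite set, let P : S × S → ℝ be a row-stochastic matrix (P(s,s′) ≥ 0 and Σ_{s′} P(s,s′) = 1 for every s), and let ν : S → ℝ be a probability vector (ν(s) ≥ 0, Σ_s ν(s) = 1) that is invariant for P, with ν(s) > 0 for every s ∈ S, and with P irreducible (for all s, s′ ∈ S there exists n ≥ 1 with (P^n)(s,s′) > 0). Let d ≥ 1, let ψ : S → ℝ^d be any feature map, and define the matrix M := Σ_s Σ_{s′} ν(s) P(s,s′) ψ(s)(ψ(s) − ψ(s′))ᵀ ∈ ℝ^{d×d}. Then for every ζ ∈ ℝ^d, Mζ = 0 if and only if the function s ↦ ⟨ψ(s), ζ⟩ is constant on S. In particular, the kernel of M equals { ζ ∈ ℝ^d : ⟨ψ(s), ζ⟩ = ⟨ψ(s′), ζ⟩ for all s, s′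 ∈ S }. -/
/-!
The quadratic form `ζᵀMζ` is the Dirichlet form `½ Σ ν(s) P(s,s') (f s - f s')²` of
`f = ⟨ψ(·), ζ⟩`: expanding the square, row-stochasticity of `P` and invariance of `ν` turn both
square terms into `Σ ν(s) f(s)²`. Hence `Mζ = 0` forces `f` to agree across every transition of
positive probability, so along every path of the chain, and irreducibility connects any two
states. Conversely, for constant `f` every summand of `Mζ` vanishes.
-/

open Matrix Finset

section TDMatrix

variable {S ι R : Type*} [Fintype S] [Fintype ι]

section CommRing
variable [CommRing R]

def tdMatrix (ν : S → R) (P : Matrix S S R) (ψ : S → ι → R) : Matrix ι ι R :=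
  ∑ s, ∑ s', (ν s * P s s') • vecMulVec (ψ s) (ψ s - ψ s')

theorem tdMatrix_mulVec (ν : S → R) (P : Matrix S S R) (ψ : S → ι → R) (ζ : ι → R) :
    tdMatrix ν P ψ *ᵥ ζ = ∑ s, ∑ s', (ν s * P s s' * (ψ s ⬝ᵥ ζ - ψ s' ⬝ᵥ ζ)) • ψ s := by
  simp only [tdMatrix, sum_mulVec, smul_mulVec, vecMulVec_mulVec, op_smul_eq_smul, smul_smul,
    sub_dotProduct]

end CommRing

section Field
variable [Field R]

def dirichletForm (ν : S → R) (P : Matrix S S R) (f : S → R) : R :=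
  (∑ s, ∑ s', ν s * P s s' * (f s - f s') ^ 2) / 2

theorem sum_mul_sub_mul_eq_dirichletForm [CharZero R] {ν : S → R} {P : Matrix S S R}
    (hP1 : ∀ s, ∑ s', P s s' = 1) (hinv : ∀ s', ∑ s, ν s * P s s' = ν s') (f : S → R) :
    ∑ s, ∑ s', ν s * P s s' * (f s - f s') * f s = dirichletForm ν P f := by
  have hrow : ∑ s, ∑ s', ν s * P s s' * f s ^ 2 = ∑ s, ν s * f s ^ 2 := by
    simp_rw [← sum_mul, ← mul_sum, hP1, mul_one]
  have hcol : ∑ s, ∑ s', ν s * P s s' * f s' ^ 2 = ∑ s, ν s * f s ^ 2 := by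
    rw [sum_comm]
    simp_rw [← sum_mul, hinv]
  have hexpand : ∑ s, ∑ s', ν s * P s s' * (f s - f s') ^ 2 =
      2 * ∑ s, ∑ s', ν s * P s s' * (f s - f s') * f s
        - ∑ s, ∑ s', ν s * P s s' * f s ^ 2 + ∑ s, ∑ s', ν s * P s s' * f s' ^ 2 := by
    simp only [mul_sum, ← sum_sub_distrib, ← sum_add_distrib]
    exact sum_congr rfl fun s _ => sum_congr rfl fun s' _ => by ring
  rw [dirichletForm, hexpand, hrow, hcol]
  field_simp
  ring

theorem dotProduct_tdMatrix_mulVec [CharZero R] {ν : S → R} {P : Matrix S S R}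
    (hP1 : ∀ s, ∑ s', P s s' = 1) (hinv : ∀ s', ∑ s, ν s * P s s' = ν s')
    (ψ : S → ι → R) (ζ : ι → R) :
    ζ ⬝ᵥ (tdMatrix ν P ψ *ᵥ ζ) = dirichletForm ν P (fun s => ψ s ⬝ᵥ ζ) := by
  rw [tdMatrix_mulVec, ← sum_mul_sub_mul_eq_dirichletForm hP1 hinv, dotProduct_comm]
  simp only [sum_dotProduct, smul_dotProduct, smul_eq_mul]

variable [LinearOrder R] [IsStrictOrderedRing R]

theorem eq_of_dirichletForm_eq_zero {ν : S → R} {P : Matrix S S R} {f : S → R}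
    (hν0 : ∀ s, 0 < ν s) (hP0 : ∀ s s', 0 ≤ P s s') (hE : dirichletForm ν P f = 0)
    {s s' : S} (hss' : 0 < P s s') : f s = f s' := by
  have hterm_nonneg : ∀ a b, 0 ≤ ν a * P a b * (f a - f b) ^ 2 := fun a b =>
    mul_nonneg (mul_nonneg (hν0 a).le (hP0 a b)) (sq_nonneg _)
  have hsum : ∑ a, ∑ b, ν a * P a b * (f a - f b) ^ 2 = 0 := by
    simpa [dirichletForm] using hE
  have hterm : ν s * P s s' * (f s - f s') ^ 2 = 0 := by
    rw [Fintype.sum_eq_zero_iff_of_nonneg (fun a => sum_nonneg fun b _ => hterm_nonneg a b)]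
      at hsum
    exact congrFun ((Fintype.sum_eq_zero_iff_of_nonneg (hterm_nonneg s)).1 (congrFun hsum s)) s'
  have hsq : (f s - f s') ^ 2 = 0 :=
    (mul_eq_zero.1 hterm).resolve_left (mul_pos (hν0 s) hss').ne'
  exact sub_eq_zero.1 (pow_eq_zero_iff two_ne_zero |>.1 hsq)

end Field

end TDMatrix

theorem Matrix.eq_of_pow_apply_pos {n R α : Type*} [Fintype n] [DecidableEq n] [Ring R]
    [LinearOrder R] [IsStrictOrderedRing R] {A : Matrix n n R} (hA : ∀ i j, 0 ≤ A i j)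
    {f : n → α} (hf : ∀ i j, 0 < A i j → f i = f j) {k : ℕ} {i j : n}
    (hk : 0 < (A ^ k) i j) : f i = f j := by
  let := toQuiver A
  obtain ⟨p, -⟩ := (pow_apply_pos_iff_nonempty_path hA k i j).1 hk
  clear hk
  induction p with
  | nil => rfl
  | cons _ e ih => exact ih.trans (hf _ _ e.down)

theorem td_matrix_kernel_characterization_general {S : Type*} [Fintype S] [DecidableEq S]
    (P : Matrix S S ℝ) (ν : S → ℝ)
    (hP0 : ∀ s s', 0 ≤ P s s') (hP1 : ∀ s, ∑ s' : S, P s s' = 1)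
    (hν0 : ∀ s, 0 < ν s)
    (hinv : ∀ s', ∑ s : S, ν s * P s s' = ν s')
    (hirr : ∀ s s', ∃ n : ℕ, 1 ≤ n ∧ 0 < (P ^ n) s s')
    (d : ℕ) (ψ : S → Fin d → ℝ) :
    ∀ ζ : Fin d → ℝ,
      (∑ s : S, ∑ s' : S, (ν s * P s s') • Matrix.vecMulVec (ψ s) (ψ s - ψ s')).mulVec ζ = 0
      ↔ ∀ s s', dotProduct (ψ s) ζ = dotProduct (ψ s') ζ := by
  intro ζ
  change tdMatrix ν P ψ *ᵥ ζ = 0 ↔ _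
  constructor
  · intro hM s s'
    have hE : dirichletForm ν P (fun s => ψ s ⬝ᵥ ζ) = 0 := by
      rw [← dotProduct_tdMatrix_mulVec hP1 hinv, hM, dotProduct_zero]
    obtain ⟨n, -, hn⟩ := hirr s s'
    exact eq_of_pow_apply_pos hP0 (fun _ _ => eq_of_dirichletForm_eq_zero hν0 hP0 hE) hn
  · intro hconst
    rw [tdMatrix_mulVec]
    refine sum_eq_zero fun s _ => sum_eq_zero fun s' _ => ?_
    rw [hconst s s', sub_self, mul_zero, zero_smul]

/-- Kernel characterization of the population TD(0) critic matrix
M = Σ_{s,s'} ν(s) P(s,s') ψ(s)(ψ(s) − ψ(s'))ᵀ: for an irreducible row-stochastic P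
with fully supported invariant probability vector ν, Mζ = 0 iff s ↦ ⟨ψ(s), ζ⟩ is
constant on S. -/
theorem td_matrix_kernel_characterization {S : Type*} [Fintype S] [DecidableEq S] [Nonempty S]
    (P : Matrix S S ℝ) (ν : S → ℝ)
    (hP0 : ∀ s s', 0 ≤ P s s') (hP1 : ∀ s, ∑ s' : S, P s s' = 1)
    (hν0 : ∀ s, 0 < ν s) (hν1 : ∑ s : S, ν s = 1)
    (hinv : ∀ s', ∑ s : S, ν s * P s s' = ν s')
    (hirr : ∀ s s', ∃ n : ℕ, 1 ≤ n ∧ 0 < (P ^ n) s s')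
    (d : ℕ) (hd : 1 ≤ d) (ψ : S → Fin d → ℝ) :
    ∀ ζ : Fin d → ℝ,
      (∑ s : S, ∑ s' : S, (ν s * P s s') • Matrix.vecMulVec (ψ s) (ψ s - ψ s')).mulVec ζ = 0
      ↔ ∀ s s', dotProduct (ψ s) ζ = dotProduct (ψ s') ζ :=
  td_matrix_kernel_characterization_general P ν hP0 hP1 hν0 hinv hirr d ψ
end
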